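/- Let λ ∈ (0,2), let φ ∈ C²_b(ℝⁿ) (bounded with bounded first and second derivatives), and let α ∈ C²(ℝ) be a convex function. Then pointwise on ℝⁿ, g_λ(α(φ)) ≤ α'(φ) · g_λ(φ). -/

import Mathlib

open MeasureTheory Real Filter Topology Set Function
open scoped ENNReal FourierTransform

noncomputable section

namespace Boussinesq

/-- The Fourier transform of a real-valued function on `ℝ`. -/
def FT (f : ℝ → ℝ) : ℝ → ℂ :=
  FourierTransform.fourier (fun x : ℝ => (f x : ℂ))

/-- The inverse Fourier transform (real part). -/
def IFT (F : ℝ → ℂ) : ℝ → ℝ :=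
  fun x => (FourierTransform.fourierInv F x).re

/-- The `H^s(ℝ)` Sobolev norm, defined through the Fourier transform. -/
def HsNorm (s : ℝ) (f : ℝ → ℝ) : ℝ :=
  (∫ ξ : ℝ, (1 + ξ ^ 2) ^ s * ‖FT f ξ‖ ^ 2) ^ (1 / 2 : ℝ)

/-- Membership in the Sobolev space `H^s(ℝ)`. -/
def MemHs (s : ℝ) (f : ℝ → ℝ) : Prop :=
  MemLp f 2 (volume : Measure ℝ) ∧
    Integrable (fun ξ : ℝ => (1 + ξ ^ 2) ^ s * ‖FT f ξ‖ ^ 2)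

/-- The `L¹` norm. -/
def L1Norm (f : ℝ → ℝ) : ℝ := ∫ x : ℝ, |f x|

/-- The `L²` norm. -/
def L2Norm (f : ℝ → ℝ) : ℝ := (∫ x : ℝ, (f x) ^ 2) ^ (1 / 2 : ℝ)

/-- The `L^∞` norm. -/
def LinfNorm (f : ℝ → ℝ) : ℝ := (eLpNorm f ⊤ (volume : Measure ℝ)).toReal

/-- The space-time `L^∞` norm on `(0,T) × ℝ`. -/
def LinfNormST (T : ℝ) (f : ℝ → ℝ → ℝ) : ℝ :=
  (eLpNorm (fun p : ℝ × ℝ => f p.1 p.2) ⊤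
    ((volume : Measure (ℝ × ℝ)).restrict (Set.Ioo 0 T ×ˢ Set.univ))).toReal

/-- The fractal operator `g_λ`, the Fourier multiplier with symbol `|ξ|^λ`. -/
def gOp (lam : ℝ) (f : ℝ → ℝ) : ℝ → ℝ :=
  IFT (fun ξ => ((|ξ| ^ lam : ℝ) : ℂ) * FT f ξ)

/-- Partial derivative in the second (space) variable. -/
def dX (ψ : ℝ → ℝ → ℝ) : ℝ → ℝ → ℝ := fun t x => deriv (ψ t) x

/-- Partial derivative in the first (time) variable. -/
def dT (ψ : ℝ → ℝ → ℝ) : ℝ → ℝ → ℝ := fun t x => deriv (fun s => ψ s x) t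

/-- Test functions : smooth and compactly supported on `ℝ × ℝ`. -/
def IsTest (ψ : ℝ → ℝ → ℝ) : Prop :=
  ContDiff ℝ (⊤ : ℕ∞) (Function.uncurry ψ) ∧ HasCompactSupport (Function.uncurry ψ)

/-- Weak formulation of the first (mass) equation
`ζ_t + u_x + (uζ)_x + ε g_λ(ζ) = 0`, `ζ(0) = ζ₀`, tested against `ψ`. -/
def WeakEq1 (eps lam : ℝ) (ζ₀ : ℝ → ℝ) (ζ u : ℝ → ℝ → ℝ) (ψ : ℝ → ℝ → ℝ) : Prop :=
  (∫ t in Set.Ioi (0 : ℝ), ∫ x : ℝ,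
      (dT ψ t x * ζ t x + dX ψ t x * (u t x + u t x * ζ t x)
        - eps * ζ t x * gOp lam (ψ t) x))
    + (∫ x : ℝ, ψ 0 x * ζ₀ x) = 0

/-- Weak formulation of the second (velocity) equation
`u_t + ζ_x + u u_x − u_{xxt} = 0`, `u(0) = u₀`, tested against `ψ`. -/
def WeakEq2 (u₀ : ℝ → ℝ) (ζ u : ℝ → ℝ → ℝ) (ψ : ℝ → ℝ → ℝ) : Prop :=
  (∫ t in Set.Ioi (0 : ℝ), ∫ x : ℝ,
      ((dT ψ t x - dT (dX (dX ψ)) t x) * u t x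
        + dX ψ t x * (ζ t x + (u t x) ^ 2 / 2)))
    + (∫ x : ℝ, (ψ 0 x - dX (dX ψ) 0 x) * u₀ x) = 0

/-- `(ζ,u)` is a distributional solution of the `ε`-regularized Boussinesq system on `[0,T)`
with initial data `(ζ₀,u₀)`. -/
def IsSolRegOn (eps lam T : ℝ) (ζ₀ u₀ : ℝ → ℝ) (ζ u : ℝ → ℝ → ℝ) : Prop :=
  ∀ ψ : ℝ → ℝ → ℝ, IsTest ψ → (∀ t x, T ≤ t → ψ t x = 0) →
    WeakEq1 eps lam ζ₀ ζ u ψ ∧ WeakEq2 u₀ ζ u ψ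

/-- `(ζ,u)` is a global-in-time distributional solution of the `ε`-regularized
Boussinesq system with initial data `(ζ₀,u₀)`. -/
def IsSolReg (eps lam : ℝ) (ζ₀ u₀ : ℝ → ℝ) (ζ u : ℝ → ℝ → ℝ) : Prop :=
  ∀ ψ : ℝ → ℝ → ℝ, IsTest ψ → WeakEq1 eps lam ζ₀ ζ u ψ ∧ WeakEq2 u₀ ζ u ψ

/-- `(ζ,u)` is a global distributional solution of the classical Boussinesq system
`ζ_t + u_x + (uζ)_x = 0`, `u_t + ζ_x + u u_x − u_{xxt} = 0`. -/
def IsSolCB (ζ₀ u₀ : ℝ → ℝ) (ζ u : ℝ → ℝ → ℝ) : Prop :=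
  IsSolReg 0 1 ζ₀ u₀ ζ u

/-- `t ↦ f t` belongs to `C(I ; H^s)`. -/
def ContHsOn (s : ℝ) (I : Set ℝ) (f : ℝ → ℝ → ℝ) : Prop :=
  (∀ t ∈ I, MemHs s (f t)) ∧
    ∀ t₀ ∈ I, Tendsto (fun t => HsNorm s (fun x => f t x - f t₀ x))
      (nhdsWithin t₀ I) (nhds 0)

/-- `t ↦ f t` belongs to `L^∞((0,T) ; H^s)`. -/
def BddHsOn (s T : ℝ) (f : ℝ → ℝ → ℝ) : Prop :=
  ∃ C : ℝ, ∀ t ∈ Set.Ioo 0 T, MemHs s (f t) ∧ HsNorm s (f t) ≤ C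

/-- `t ↦ f t` is `C¹` with values in `H^s` on `I`. -/
def ContDiff1Hs (s : ℝ) (I : Set ℝ) (f : ℝ → ℝ → ℝ) : Prop :=
  ∃ g : ℝ → ℝ → ℝ, ContHsOn s I g ∧
    ∀ t₀ ∈ I, Tendsto (fun t => HsNorm s (fun x => (f t x - f t₀ x) / (t - t₀) - g t₀ x))
      (nhdsWithin t₀ (I \ {t₀})) (nhds 0)

/-- Equality almost everywhere on `(0,T) × ℝ`. -/
def AEEqOn2 (T : ℝ) (f g : ℝ → ℝ → ℝ) : Prop :=
  ∀ᵐ p : ℝ × ℝ ∂((volume : Measure (ℝ × ℝ)).restrict (Set.Ioo 0 T ×ˢ Set.univ)),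
    f p.1 p.2 = g p.1 p.2

/-- The entropy density `σ₀(w) = w ln w − w + 1`. -/
def sigma0 (w : ℝ) : ℝ := w * Real.log w - w + 1

/-- The squared `H¹` norm, `|f|² + |f_x|²` in `L²`. -/
def H1NormSq (f : ℝ → ℝ) : ℝ := (∫ x : ℝ, (f x) ^ 2) + ∫ x : ℝ, (deriv f x) ^ 2

end Boussinesq

namespace Boussinesq

/-- The fractional operator `g_λ = (−Δ)^{λ/2}` on `ℝⁿ` (with normalizing constant `c`), via
its symmetrized singular-integral representation
`g_λ(φ)(x) = (c/2) ∫ (2φ(x) − φ(x+z) − φ(x−z)) |z|^{−n−λ} dz`,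
which converges absolutely on `C²_b` functions for `0 < λ < 2`. -/
def gSing (n : ℕ) (lam c : ℝ) (φ : EuclideanSpace ℝ (Fin n) → ℝ) :
    EuclideanSpace ℝ (Fin n) → ℝ :=
  fun x => (c / 2) *
    ∫ z : EuclideanSpace ℝ (Fin n),
      (2 * φ x - φ (x + z) - φ (x - z)) / ‖z‖ ^ ((n : ℝ) + lam)

/-- `φ ∈ C²_b(ℝⁿ)` : twice continuously differentiable with bounded derivatives of order
`≤ 2`. -/
def IsC2b (n : ℕ) (φ : EuclideanSpace ℝ (Fin n) → ℝ) : Prop :=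
  ContDiff ℝ 2 φ ∧ ∀ i : ℕ, i ≤ 2 → ∃ C : ℝ, ∀ x, ‖iteratedFDeriv ℝ i φ x‖ ≤ C

open Metric Module in

lemma tangent_le {α : ℝ → ℝ} (hd : Differentiable ℝ α)
    (hconv : ConvexOn ℝ Set.univ α) (a b : ℝ) :
    α a + deriv α a * (b - a) ≤ α b := by
  rcases lt_trichotomy a b with h | h | h
  · have h1 := hconv.deriv_le_slope (mem_univ a) (mem_univ b) h (hd a)
    rw [slope_def_field] at h1
    have h2 : deriv α a * (b - a) ≤ α b - α a := by
      rw [← le_div_iff₀ (by linarith)]; exact h1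
    linarith
  · subst h; simp
  · have h1 := hconv.slope_le_deriv (mem_univ b) (mem_univ a) h (hd a)
    rw [slope_def_field] at h1
    have h2 : α a - α b ≤ deriv α a * (a - b) := by
      rw [← div_le_iff₀ (by linarith)]; exact h1
    linarith

open Metric Module in

lemma second_diff_bound {E : Type*} [NormedAddCommGroup E] [NormedSpace ℝ E]
    {ψ : E → ℝ} (hd : Differentiable ℝ ψ) {C : ℝ} (hC0 : 0 ≤ C)
    (hC : ∀ u v, ‖fderiv ℝ ψ u - fderiv ℝ ψ v‖ ≤ C * ‖u - v‖) (x z : E) :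
    |2 * ψ x - ψ (x + z) - ψ (x - z)| ≤ 2 * C * ‖z‖ ^ (2 : ℕ) := by
  set L := fderiv ℝ ψ x with hL
  set g : E → ℝ := fun y => ψ y - L y + L x with hg
  have hgd : ∀ y, HasFDerivAt g (fderiv ℝ ψ y - L) y := fun y =>
    ((hd y).hasFDerivAt.sub L.hasFDerivAt).add_const (L x)
  have key : ∀ w ∈ closedBall x ‖z‖, ‖g w - g x‖ ≤ C * ‖z‖ * ‖w - x‖ := by
    intro w hw
    refine Convex.norm_image_sub_le_of_norm_fderiv_le
      (fun y _ => (hgd y).differentiableAt) (fun y hy => ?_)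
      (convex_closedBall x ‖z‖) (mem_closedBall_self (norm_nonneg z)) hw
    rw [(hgd y).fderiv]
    calc ‖fderiv ℝ ψ y - L‖ ≤ C * ‖y - x‖ := hC y x
      _ ≤ C * ‖z‖ := by
          have : ‖y - x‖ ≤ ‖z‖ := by rw [← dist_eq_norm]; exact mem_closedBall.mp hy
          exact mul_le_mul_of_nonneg_left this hC0
  have h1 : ‖g (x + z) - g x‖ ≤ C * ‖z‖ * ‖z‖ := by
    have := key (x + z) (by simp [mem_closedBall, dist_eq_norm])
    simpa using this
  have h2 : ‖g (x - z) - g x‖ ≤ C * ‖z‖ * ‖z‖ := by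
    have := key (x - z) (by simp [mem_closedBall, dist_eq_norm])
    simpa using this
  have e1 : g (x + z) - g x = ψ (x + z) - ψ x - L z := by
    simp only [hg]; have : L (x + z) = L x + L z := by rw [map_add]
    simp [this]; ring
  have e2 : g (x - z) - g x = ψ (x - z) - ψ x + L z := by
    simp only [hg]; have : L (x - z) = L x - L z := by rw [map_sub]
    simp [this]; ring
  rw [e1] at h1; rw [e2] at h2
  have : |2 * ψ x - ψ (x + z) - ψ (x - z)|
      = |-((ψ (x + z) - ψ x - L z) + (ψ (x - z) - ψ x + L z))| := by ring_nf
  rw [this, abs_neg]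
  calc |(ψ (x + z) - ψ x - L z) + (ψ (x - z) - ψ x + L z)|
      ≤ |ψ (x + z) - ψ x - L z| + |ψ (x - z) - ψ x + L z| := abs_add_le _ _
    _ ≤ C * ‖z‖ * ‖z‖ + C * ‖z‖ * ‖z‖ := by
        rw [Real.norm_eq_abs] at h1 h2; exact add_le_add h1 h2
    _ = 2 * C * ‖z‖ ^ (2:ℕ) := by ring

open Metric Module in

lemma integrableOn_rpow_norm_ball {E : Type*} [NormedAddCommGroup E] [NormedSpace ℝ E]
    [MeasurableSpace E] [BorelSpace E] [FiniteDimensional ℝ E]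
    {μ : Measure E} [μ.IsAddHaarMeasure] {p : ℝ}
    (hp : -(finrank ℝ E : ℝ) < p) :
    IntegrableOn (fun z : E => ‖z‖ ^ p) (ball (0 : E) 1) μ := by
  have hmeas : Measurable (fun z : E => ‖z‖ ^ p) := by fun_prop
  haveI : IsFiniteMeasure (μ.restrict (ball (0:E) 1)) :=
    ⟨by rw [Measure.restrict_apply_univ]; exact measure_ball_lt_top⟩
  rcases le_or_gt 0 p with hp0 | hp0
  · refine Integrable.mono' (integrable_const (1:ℝ)) hmeas.aestronglyMeasurable.restrict ?_
    rw [ae_restrict_iff' measurableSet_ball]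
    refine Filter.Eventually.of_forall (fun z hz => ?_)
    rw [Real.norm_eq_abs, abs_of_nonneg (Real.rpow_nonneg (norm_nonneg z) p)]
    exact Real.rpow_le_one (norm_nonneg z) (le_of_lt (mem_ball_zero_iff.mp hz)) hp0
  · have hpne : p ≠ 0 := ne_of_lt hp0
    constructor
    · exact hmeas.aestronglyMeasurable.restrict
    · rw [hasFiniteIntegral_iff_ofReal (Filter.Eventually.of_forall
        (fun z => Real.rpow_nonneg (norm_nonneg z) p)),
        lintegral_eq_lintegral_meas_le _ (Filter.Eventually.of_forall
        (fun z => Real.rpow_nonneg (norm_nonneg z) p)) hmeas.aemeasurable]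
      have hsub : ∀ t : ℝ, 0 < t → {a : E | t ≤ ‖a‖ ^ p} ⊆ closedBall (0:E) (t ^ p⁻¹) := by
        intro t ht a ha
        simp only [mem_setOf_eq] at ha
        rcases eq_or_ne a 0 with rfl | ha0
        · exfalso
          rw [norm_zero, Real.zero_rpow hpne] at ha
          exact absurd (ht.trans_le ha) (lt_irrefl 0)
        · have hna : 0 < ‖a‖ := norm_pos_iff.mpr ha0
          have h1 : (‖a‖ ^ p) ^ p⁻¹ ≤ t ^ p⁻¹ :=
            Real.rpow_le_rpow_of_nonpos ht ha (le_of_lt (inv_neg''.mpr hp0))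
          rw [← Real.rpow_mul (le_of_lt hna), mul_inv_cancel₀ hpne, Real.rpow_one] at h1
          exact mem_closedBall_zero_iff.mpr h1
      -- bound the distribution function
      have hbound : ∀ t ∈ Ioi (1:ℝ),
          (μ.restrict (ball (0:E) 1)) {a : E | t ≤ ‖a‖ ^ p}
            ≤ ENNReal.ofReal (t ^ (p⁻¹ * finrank ℝ E)) * μ (ball (0:E) 1) := by
        intro t ht
        have ht0 : (0:ℝ) < t := lt_trans one_pos ht
        calc (μ.restrict (ball (0:E) 1)) {a : E | t ≤ ‖a‖ ^ p}
            ≤ μ {a : E | t ≤ ‖a‖ ^ p} := Measure.restrict_le_self _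
          _ ≤ μ (closedBall (0:E) (t ^ p⁻¹)) := measure_mono (hsub t ht0)
          _ = ENNReal.ofReal ((t ^ p⁻¹) ^ finrank ℝ E) * μ (ball (0:E) 1) :=
              μ.addHaar_closedBall _ (Real.rpow_nonneg (le_of_lt ht0) _)
          _ = ENNReal.ofReal (t ^ (p⁻¹ * finrank ℝ E)) * μ (ball (0:E) 1) := by
              rw [← Real.rpow_natCast (t ^ p⁻¹) (finrank ℝ E),
                ← Real.rpow_mul (le_of_lt ht0)]
      calc ∫⁻ t in Ioi (0:ℝ), (μ.restrict (ball (0:E) 1)) {a : E | t ≤ ‖a‖ ^ p}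
          ≤ ∫⁻ t in Ioc (0:ℝ) 1 ∪ Ioi 1, (μ.restrict (ball (0:E) 1)) {a : E | t ≤ ‖a‖ ^ p} :=
            lintegral_mono_set Ioi_subset_Ioc_union_Ioi
        _ ≤ (∫⁻ t in Ioc (0:ℝ) 1, (μ.restrict (ball (0:E) 1)) {a : E | t ≤ ‖a‖ ^ p})
            + ∫⁻ t in Ioi (1:ℝ), (μ.restrict (ball (0:E) 1)) {a : E | t ≤ ‖a‖ ^ p} :=
            lintegral_union_le _ _ _
        _ < ⊤ := by
            refine ENNReal.add_lt_top.2 ⟨?_, ?_⟩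
            · calc ∫⁻ t in Ioc (0:ℝ) 1, (μ.restrict (ball (0:E) 1)) {a : E | t ≤ ‖a‖ ^ p}
                  ≤ ∫⁻ _ in Ioc (0:ℝ) 1, μ (ball (0:E) 1) := by
                    refine lintegral_mono (fun t => ?_)
                    calc (μ.restrict (ball (0:E) 1)) {a : E | t ≤ ‖a‖ ^ p}
                        ≤ (μ.restrict (ball (0:E) 1)) univ := measure_mono (subset_univ _)
                      _ = μ (ball (0:E) 1) := Measure.restrict_apply_univ _
                _ = μ (ball (0:E) 1) * volume (Ioc (0:ℝ) 1) := by
                    rw [setLIntegral_const]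
                _ < ⊤ := ENNReal.mul_lt_top measure_ball_lt_top (by simp)
            · calc ∫⁻ t in Ioi (1:ℝ), (μ.restrict (ball (0:E) 1)) {a : E | t ≤ ‖a‖ ^ p}
                  ≤ ∫⁻ t in Ioi (1:ℝ),
                      ENNReal.ofReal (t ^ (p⁻¹ * finrank ℝ E)) * μ (ball (0:E) 1) :=
                    setLIntegral_mono' measurableSet_Ioi hbound
                _ = (∫⁻ t in Ioi (1:ℝ), ENNReal.ofReal (t ^ (p⁻¹ * finrank ℝ E)))
                      * μ (ball (0:E) 1) :=
                    lintegral_mul_const' _ _ measure_ball_lt_top.ne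
                _ < ⊤ := by
                    refine ENNReal.mul_lt_top ?_ measure_ball_lt_top
                    have hexp : p⁻¹ * (finrank ℝ E : ℝ) < -1 := by
                      rw [inv_mul_eq_div, div_lt_iff_of_neg hp0]
                      linarith
                    exact (integrableOn_Ioi_rpow_of_lt hexp one_pos).lintegral_lt_top

open Metric Module in


lemma integrable_div_kernel {n : ℕ} {lam : ℝ} (hlam : lam ∈ Set.Ioo (0:ℝ) 2)
    {N : EuclideanSpace ℝ (Fin n) → ℝ} (hN : Continuous N) {K M : ℝ}
    (h2 : ∀ z, |N z| ≤ K * ‖z‖ ^ (2:ℕ)) (hB : ∀ z, |N z| ≤ M) :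
    Integrable (fun z : EuclideanSpace ℝ (Fin n) => N z / ‖z‖ ^ ((n:ℝ) + lam)) := by
  obtain ⟨hl0, hl2⟩ := hlam
  have hq0 : (0:ℝ) ≤ (n:ℝ) + lam := by positivity
  have hqpos : (0:ℝ) < (n:ℝ) + lam := by positivity
  set K' : ℝ := max K 0 with hK'
  have hK0 : 0 ≤ K' := le_max_right _ _
  have h2' : ∀ z, |N z| ≤ K' * ‖z‖ ^ (2:ℕ) := fun z =>
    (h2 z).trans (mul_le_mul_of_nonneg_right (le_max_left _ _) (by positivity))
  have hM0 : 0 ≤ M := (abs_nonneg (N 0)).trans (hB 0)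
  have hmeas : AEStronglyMeasurable
      (fun z : EuclideanSpace ℝ (Fin n) => N z / ‖z‖ ^ ((n:ℝ) + lam)) volume := by
    apply Measurable.aestronglyMeasurable
    exact hN.measurable.div (by fun_prop)
  rw [← integrableOn_univ, ← union_compl_self (ball (0 : EuclideanSpace ℝ (Fin n)) 1)]
  refine IntegrableOn.union ?_ ?_
  · -- on the ball : dominated by K * ‖z‖^(2 - (n+lam))
    refine Integrable.mono
      (((integrableOn_rpow_norm_ball (μ := volume)
        (p := 2 - ((n:ℝ) + lam)) ?_).const_mul K')) hmeas.restrict ?_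
    · rw [finrank_euclideanSpace_fin]; linarith
    · refine Filter.Eventually.of_forall (fun z => ?_)
      rcases eq_or_ne z 0 with rfl | hz
      · simp only [norm_zero, Real.zero_rpow (ne_of_gt hqpos), div_zero, norm_zero]
        positivity
      · have hz0 : (0:ℝ) < ‖z‖ := norm_pos_iff.mpr hz
        rw [Real.norm_eq_abs, Real.norm_eq_abs, abs_div, abs_of_nonneg (Real.rpow_nonneg (norm_nonneg z) _),
          abs_of_nonneg (by positivity : (0:ℝ) ≤ K' * ‖z‖ ^ (2 - ((n:ℝ) + lam)))]
        rw [div_le_iff₀ (Real.rpow_pos_of_pos hz0 _)]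
        calc |N z| ≤ K' * ‖z‖ ^ (2:ℕ) := h2' z
          _ = K' * ‖z‖ ^ (2 - ((n:ℝ) + lam)) * ‖z‖ ^ ((n:ℝ) + lam) := by
              have hexp : 2 - ((n:ℝ) + lam) + ((n:ℝ) + lam) = ((2:ℕ):ℝ) := by
                push_cast; ring
              rw [mul_assoc, ← Real.rpow_add hz0, hexp, Real.rpow_natCast]
  · -- off the ball : dominated by M * 2^(n+lam) * (1+‖z‖)^(-(n+lam))
    refine Integrable.mono
      (((integrable_one_add_norm (μ := (volume : Measure (EuclideanSpace ℝ (Fin n))))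
          (r := (n:ℝ) + lam) ?_).const_mul (M * 2 ^ ((n:ℝ) + lam))).integrableOn)
      hmeas.restrict ?_
    · rw [finrank_euclideanSpace_fin]; linarith
    · rw [ae_restrict_iff' measurableSet_ball.compl]
      refine Filter.Eventually.of_forall (fun z hz => ?_)
      have hz1 : (1:ℝ) ≤ ‖z‖ := by
        simpa [mem_ball_zero_iff] using hz
      have hz0 : (0:ℝ) < ‖z‖ := lt_of_lt_of_le one_pos hz1
      have h1z : (0:ℝ) < 1 + ‖z‖ := by positivity
      rw [Real.norm_eq_abs, Real.norm_eq_abs, abs_div,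
        abs_of_nonneg (Real.rpow_nonneg (norm_nonneg z) _)]
      have hrhs : |M * 2 ^ ((n:ℝ) + lam) * (1 + ‖z‖) ^ (-((n:ℝ) + lam))|
          = M * 2 ^ ((n:ℝ) + lam) * (1 + ‖z‖) ^ (-((n:ℝ) + lam)) := by
        refine abs_of_nonneg ?_
        have := Real.rpow_nonneg (le_of_lt h1z) (-((n:ℝ) + lam))
        positivity
      rw [hrhs, Real.rpow_neg (le_of_lt h1z), ← div_eq_mul_inv]
      rw [div_le_div_iff₀ (Real.rpow_pos_of_pos hz0 _) (Real.rpow_pos_of_pos h1z _)]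
      calc |N z| * (1 + ‖z‖) ^ ((n:ℝ) + lam)
          ≤ M * ((2 * ‖z‖) ^ ((n:ℝ) + lam)) := by
            refine mul_le_mul (hB z) ?_ (Real.rpow_nonneg (le_of_lt h1z) _) hM0
            exact Real.rpow_le_rpow (le_of_lt h1z) (by linarith) hq0
        _ = M * 2 ^ ((n:ℝ) + lam) * ‖z‖ ^ ((n:ℝ) + lam) := by
            rw [Real.mul_rpow (by norm_num) (norm_nonneg z)]; ring

/-- (Córdoba–Córdoba / Droniou–Imbert type inequality.) Let `λ ∈ (0,2)`,
`φ ∈ C²_b(ℝⁿ)` and let `α ∈ C²(ℝ)` be convex. Then pointwise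
`g_λ(α(φ)) ≤ α'(φ) · g_λ(φ)`. -/
theorem fractional_convexity_inequality
    (n : ℕ) (hn : 0 < n) (lam : ℝ) (hlam : lam ∈ Set.Ioo (0 : ℝ) 2) (c : ℝ) (hc : 0 < c)
    (φ : EuclideanSpace ℝ (Fin n) → ℝ) (hφ : IsC2b n φ)
    (α : ℝ → ℝ) (hα : ContDiff ℝ 2 α) (hconv : ConvexOn ℝ Set.univ α) :
    ∀ x : EuclideanSpace ℝ (Fin n),
      gSing n lam c (fun y => α (φ y)) x ≤ deriv α (φ x) * gSing n lam c φ x := by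
  obtain ⟨hφ2, hbnd⟩ := hφ
  obtain ⟨M₀, hM₀'⟩ := hbnd 0 (by norm_num)
  obtain ⟨M₁, hM₁'⟩ := hbnd 1 (by norm_num)
  obtain ⟨C₂, hC₂'⟩ := hbnd 2 (by norm_num)
  have hφ0 : ∀ y, |φ y| ≤ M₀ := fun y => by
    rw [← Real.norm_eq_abs, ← norm_iteratedFDeriv_zero (𝕜 := ℝ) (f := φ) (x := y)]; exact hM₀' y
  have hφ1 : ∀ y, ‖fderiv ℝ φ y‖ ≤ M₁ := fun y => by
    rw [← norm_iteratedFDeriv_zero (𝕜 := ℝ) (f := fderiv ℝ φ) (x := y), norm_iteratedFDeriv_fderiv]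
    exact hM₁' y
  have hφ2' : ∀ y, ‖fderiv ℝ (fderiv ℝ φ) y‖ ≤ C₂ := fun y => by
    rw [← norm_iteratedFDeriv_zero (𝕜 := ℝ) (f := fderiv ℝ (fderiv ℝ φ)) (x := y),
      norm_iteratedFDeriv_fderiv, norm_iteratedFDeriv_fderiv]
    exact hC₂' y
  have hM₀0 : 0 ≤ M₀ := (abs_nonneg _).trans (hφ0 0)
  have hM₁0 : 0 ≤ M₁ := (norm_nonneg _).trans (hφ1 0)
  have hC₂0 : 0 ≤ C₂ := (norm_nonneg (fderiv ℝ (fderiv ℝ φ) 0)).trans (hφ2' 0)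
  have hφdiff : Differentiable ℝ φ := hφ2.differentiable two_ne_zero
  have hφcont : Continuous φ := hφ2.continuous
  have hfd1 : ContDiff ℝ 1 (fderiv ℝ φ) := hφ2.fderiv_right (by norm_num)
  have hLipD : ∀ u v, ‖fderiv ℝ φ u - fderiv ℝ φ v‖ ≤ C₂ * ‖u - v‖ := fun u v =>
    Convex.norm_image_sub_le_of_norm_fderiv_le
      (fun y _ => (hfd1.differentiable one_ne_zero y))
      (fun y _ => hφ2' y) convex_univ (mem_univ v) (mem_univ u)
  have hφLip : ∀ u v, |φ u - φ v| ≤ M₁ * ‖u - v‖ := fun u v => by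
    rw [← Real.norm_eq_abs]
    exact Convex.norm_image_sub_le_of_norm_fderiv_le
      (fun y _ => hφdiff y) (fun y _ => hφ1 y) convex_univ (mem_univ v) (mem_univ u)
  -- α data
  have hαd : Differentiable ℝ α := hα.differentiable two_ne_zero
  have hα1 : ContDiff ℝ 1 (deriv α) := by
    have h2 : ContDiff ℝ ((1 : ℕ) + 1) α := by exact_mod_cast hα
    exact (contDiff_succ_iff_deriv.mp h2).2.2
  set I : Set ℝ := Icc (-M₀) M₀ with hI
  have hrange : ∀ y, φ y ∈ I := fun y => by
    have := abs_le.mp (hφ0 y); exact ⟨this.1, this.2⟩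
  have h0I : (0:ℝ) ∈ I := ⟨by linarith, by linarith⟩
  obtain ⟨A₀, hA₀⟩ := isCompact_Icc.exists_bound_of_continuousOn
    (f := α) hα.continuous.continuousOn
  obtain ⟨A₁, hA₁⟩ := isCompact_Icc.exists_bound_of_continuousOn
    (f := deriv α) (hα.continuous_deriv one_le_two).continuousOn
  obtain ⟨A₂, hA₂⟩ := isCompact_Icc.exists_bound_of_continuousOn
    (f := deriv (deriv α)) (hα1.continuous_deriv le_rfl).continuousOn
  have hA₀0 : 0 ≤ A₀ := (norm_nonneg _).trans (hA₀ 0 h0I)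
  have hA₁0 : 0 ≤ A₁ := (norm_nonneg _).trans (hA₁ 0 h0I)
  have hA₂0 : 0 ≤ A₂ := (norm_nonneg _).trans (hA₂ 0 h0I)
  have hαLip : ∀ u ∈ I, ∀ v ∈ I, |deriv α u - deriv α v| ≤ A₂ * ‖u - v‖ := by
    intro u hu v hv
    rw [← Real.norm_eq_abs]
    exact Convex.norm_image_sub_le_of_norm_deriv_le
      (fun t _ => (hα1.differentiable one_ne_zero t))
      (fun t ht => hA₂ t ht) (convex_Icc _ _) hv hu
  -- ψ = α ∘ φ
  set ψ : EuclideanSpace ℝ (Fin n) → ℝ := fun y => α (φ y) with hψ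
  have hψ2 : ContDiff ℝ 2 ψ := hα.comp hφ2
  have hψdiff : Differentiable ℝ ψ := hψ2.differentiable two_ne_zero
  have hψfd : ∀ y, fderiv ℝ ψ y = deriv α (φ y) • fderiv ℝ φ y := fun y =>
    (HasDerivAt.comp_hasFDerivAt y ((hαd (φ y)).hasDerivAt) (hφdiff y).hasFDerivAt).fderiv
  set Cψ : ℝ := A₂ * M₁ * M₁ + A₁ * C₂ with hCψ
  have hCψ0 : 0 ≤ Cψ := by positivity
  have hψLip : ∀ u v, ‖fderiv ℝ ψ u - fderiv ℝ ψ v‖ ≤ Cψ * ‖u - v‖ := by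
    intro u v
    rw [hψfd u, hψfd v]
    have e : deriv α (φ u) • fderiv ℝ φ u - deriv α (φ v) • fderiv ℝ φ v
        = (deriv α (φ u) - deriv α (φ v)) • fderiv ℝ φ u
          + deriv α (φ v) • (fderiv ℝ φ u - fderiv ℝ φ v) := by
      rw [sub_smul, smul_sub]; abel
    rw [e]
    calc ‖(deriv α (φ u) - deriv α (φ v)) • fderiv ℝ φ u
          + deriv α (φ v) • (fderiv ℝ φ u - fderiv ℝ φ v)‖
        ≤ ‖(deriv α (φ u) - deriv α (φ v)) • fderiv ℝ φ u‖
          + ‖deriv α (φ v) • (fderiv ℝ φ u - fderiv ℝ φ v)‖ := norm_add_le _ _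
      _ = |deriv α (φ u) - deriv α (φ v)| * ‖fderiv ℝ φ u‖
          + |deriv α (φ v)| * ‖fderiv ℝ φ u - fderiv ℝ φ v‖ := by
          rw [norm_smul, norm_smul, Real.norm_eq_abs, Real.norm_eq_abs]
      _ ≤ (A₂ * (M₁ * ‖u - v‖)) * M₁ + A₁ * (C₂ * ‖u - v‖) := by
          refine add_le_add (mul_le_mul ?_ (hφ1 u) (norm_nonneg _) (by positivity))
            (mul_le_mul ?_ (hLipD u v) (norm_nonneg _) hA₁0)
          · calc |deriv α (φ u) - deriv α (φ v)| ≤ A₂ * ‖φ u - φ v‖ :=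
                hαLip _ (hrange u) _ (hrange v)
              _ ≤ A₂ * (M₁ * ‖u - v‖) := by
                  refine mul_le_mul_of_nonneg_left ?_ hA₂0
                  rw [Real.norm_eq_abs]; exact hφLip u v
          · rw [← Real.norm_eq_abs]; exact hA₁ _ (hrange v)
      _ = Cψ * ‖u - v‖ := by rw [hCψ]; ring
  have hψ0 : ∀ y, |ψ y| ≤ A₀ := fun y => by
    rw [← Real.norm_eq_abs]; exact hA₀ _ (hrange y)
  -- main part
  intro x
  set d : EuclideanSpace ℝ (Fin n) → ℝ := fun z => ‖z‖ ^ ((n:ℝ) + lam) with hd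
  have hd0 : ∀ z, 0 ≤ d z := fun z => Real.rpow_nonneg (norm_nonneg z) _
  set Nφ : EuclideanSpace ℝ (Fin n) → ℝ :=
    fun z => 2 * φ x - φ (x + z) - φ (x - z) with hNφ
  set Nψ : EuclideanSpace ℝ (Fin n) → ℝ :=
    fun z => 2 * ψ x - ψ (x + z) - ψ (x - z) with hNψ
  have hNφcont : Continuous Nφ :=
    (continuous_const.sub (hφcont.comp (continuous_const.add continuous_id))).sub
      (hφcont.comp (continuous_const.sub continuous_id))
  have hψcont : Continuous ψ := hψ2.continuous
  have hNψcont : Continuous Nψ :=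
    (continuous_const.sub (hψcont.comp (continuous_const.add continuous_id))).sub
      (hψcont.comp (continuous_const.sub continuous_id))
  have hNφ2 : ∀ z, |Nφ z| ≤ (2 * C₂) * ‖z‖ ^ (2:ℕ) := fun z => by
    have := second_diff_bound hφdiff hC₂0 hLipD x z; simpa [hNφ] using this
  have hNψ2 : ∀ z, |Nψ z| ≤ (2 * Cψ) * ‖z‖ ^ (2:ℕ) := fun z => by
    have := second_diff_bound hψdiff hCψ0 hψLip x z; simpa [hNψ] using this
  have hNφB : ∀ z, |Nφ z| ≤ 4 * M₀ := fun z => by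
    have h1 := abs_le.mp (hφ0 x); have h2 := abs_le.mp (hφ0 (x + z))
    have h3 := abs_le.mp (hφ0 (x - z))
    exact abs_le.mpr ⟨by simp only [hNφ]; linarith, by simp only [hNφ]; linarith⟩
  have hNψB : ∀ z, |Nψ z| ≤ 4 * A₀ := fun z => by
    have h1 := abs_le.mp (hψ0 x); have h2 := abs_le.mp (hψ0 (x + z))
    have h3 := abs_le.mp (hψ0 (x - z))
    exact abs_le.mpr ⟨by simp only [hNψ]; linarith, by simp only [hNψ]; linarith⟩
  have intφ : Integrable (fun z => Nφ z / d z) :=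
    integrable_div_kernel hlam hNφcont hNφ2 hNφB
  have intψ : Integrable (fun z => Nψ z / d z) :=
    integrable_div_kernel hlam hNψcont hNψ2 hNψB
  -- pointwise inequality
  have key : ∀ z, Nψ z ≤ deriv α (φ x) * Nφ z := by
    intro z
    have t1 := tangent_le hαd hconv (φ x) (φ (x + z))
    have t2 := tangent_le hαd hconv (φ x) (φ (x - z))
    simp only [hNψ, hNφ, hψ]
    nlinarith [t1, t2]
  have hpt : (fun z => Nψ z / d z) ≤ fun z => deriv α (φ x) * (Nφ z / d z) := by
    intro z
    have h1 : Nψ z * (d z)⁻¹ ≤ (deriv α (φ x) * Nφ z) * (d z)⁻¹ :=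
      mul_le_mul_of_nonneg_right (key z) (inv_nonneg.mpr (hd0 z))
    simpa [div_eq_mul_inv, mul_assoc] using h1
  have hint : ∫ z, Nψ z / d z ≤ ∫ z, deriv α (φ x) * (Nφ z / d z) :=
    integral_mono intψ (intφ.const_mul _) hpt
  rw [integral_const_mul] at hint
  -- conclude
  show (c / 2) * ∫ z, Nψ z / d z ≤ deriv α (φ x) * ((c / 2) * ∫ z, Nφ z / d z)
  have hc2 : 0 ≤ c / 2 := by linarith
  calc (c / 2) * ∫ z, Nψ z / d z
      ≤ (c / 2) * (deriv α (φ x) * ∫ z, Nφ z / d z) :=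
        mul_le_mul_of_nonneg_left hint hc2
    _ = deriv α (φ x) * ((c / 2) * ∫ z, Nφ z / d z) := by ring

end Boussinesq
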